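/- arXiv:2105.05199 — 2 statements merged into one kernel-verified Lean document; each statement's English description precedes it below -/
import Mathlib

section
/- If G is a graph with no isolated vertex and H is a complete graph on at least 2 vertices (equivalently γ^s_{(1,0)}(H)=1), then the secure domination number of G∘H equals the weak Roman domination number of G: γ^s_{(1,0)}(G∘H) = γ^s_{(1,0,0)}(G). -/
namespace SecureW

open Finset

/-- Lexicographic product of simple graphs. -/
def lexProd {α β : Type*} (G : SimpleGraph α) (H : SimpleGraph β) :
    SimpleGraph (α × β) where
  Adj p q := G.Adj p.1 q.1 ∨ (p.1 = q.1 ∧ H.Adj p.2 q.2)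
  symm := by
    constructor
    rintro p q (h | ⟨h1, h2⟩)
    · exact Or.inl h.symm
    · exact Or.inr ⟨h1.symm, h2.symm⟩
  loopless := by
    constructor
    rintro p (h | ⟨_, h⟩)
    · exact G.irrefl h
    · exact H.irrefl h

open scoped Classical in
/-- Sum of `f` over the open neighbourhood of `v`. -/
noncomputable def nbrSum {V : Type*} [Fintype V] (G : SimpleGraph V) (f : V → ℕ) (v : V) : ℕ :=
  ∑ u ∈ Finset.univ.filter (fun u => G.Adj v u), f u

/-- `f` is a `w`-dominating function, where `w` is given as a list `(w_0, …, w_l)`. -/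
def IsWDom {V : Type*} [Fintype V] (G : SimpleGraph V) (ws : List ℕ) (f : V → ℕ) : Prop :=
  (∀ v, f v < ws.length) ∧ ∀ v, ws.getD (f v) 0 ≤ nbrSum G f v

/-- The function obtained from `f` by moving one unit of weight from `u` to `v`. -/
def move {V : Type*} [DecidableEq V] (f : V → ℕ) (u v : V) : V → ℕ :=
  fun x => if x = v then 1 else if x = u then f u - 1 else f x

open scoped Classical in
/-- `f` is a secure `w`-dominating function. -/
def IsSecureWDom {V : Type*} [Fintype V] (G : SimpleGraph V) (ws : List ℕ) (f : V → ℕ) : Prop :=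
  IsWDom G ws f ∧ ∀ v, f v = 0 → ∃ u, G.Adj v u ∧ 0 < f u ∧ IsWDom G ws (move f u v)

/-- The weight of a function. -/
noncomputable def weight {V : Type*} [Fintype V] (f : V → ℕ) : ℕ := ∑ v, f v

/-- The `w`-domination number. -/
noncomputable def wDomNum {V : Type*} [Fintype V] (G : SimpleGraph V) (ws : List ℕ) : ℕ :=
  sInf {k | ∃ f, IsWDom G ws f ∧ weight f = k}

/-- The secure `w`-domination number. -/
noncomputable def secWDomNum {V : Type*} [Fintype V] (G : SimpleGraph V) (ws : List ℕ) : ℕ :=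
  sInf {k | ∃ f, IsSecureWDom G ws f ∧ weight f = k}

/-- The (ordinary) domination number, as `γ_{(1,0)}`. -/
noncomputable def domNum {V : Type*} [Fintype V] (G : SimpleGraph V) : ℕ :=
  wDomNum G [1, 0]

/-- `G` has no isolated vertex. -/
def NoIsolated {V : Type*} (G : SimpleGraph V) : Prop := ∀ v, ∃ u, G.Adj v u

/-!
Truncating the row sums `x ↦ ∑ b, f (x, b)` of a secure dominating function `f` of `G ∘ H` at `2`
gives a secure weak Roman function of `G` of no larger weight: a secure move in `G ∘ H` from
`(u, c)` to `(v, b)` changes the row sums exactly as the move from `u` to `v` does in `G`, and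
domination only depends on the support, which truncation preserves.

Conversely, a secure weak Roman function `g` of `G` is spread over two vertices `b₀ ≠ b₁` of the
complete graph `H`, one unit at `(x, b₀)` when `g x ≥ 1` and one at `(x, b₁)` when `g x = 2`. A
vertex `(x, b)` is then dominated inside its own complete fibre when `g x > 0` and through a
positive `g`-neighbour otherwise; a move of `g` from `u` is realised by moving the unit at
`(u, b₀)`, the unit at `(u, b₁)` taking over the role of the pivot when `g u = 2`.
-/

section WDom

variable {V : Type*}

def Dominates (G : SimpleGraph V) (f : V → ℕ) : Prop :=
  ∀ v, f v = 0 → ∃ u, G.Adj v u ∧ 0 < f u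

lemma Dominates.of_pos_iff {G : SimpleGraph V} {f f' : V → ℕ} (hf : Dominates G f)
    (h : ∀ x, 0 < f x ↔ 0 < f' x) : Dominates G f' := by
  intro v hv
  obtain ⟨u, hvu, hu⟩ := hf v (by have := h v; omega)
  exact ⟨u, hvu, (h u).1 hu⟩

lemma one_le_nbrSum_iff [Fintype V] (G : SimpleGraph V) (f : V → ℕ) (v : V) :
    1 ≤ nbrSum G f v ↔ ∃ u, G.Adj v u ∧ 0 < f u := by
  simp [nbrSum, Nat.one_le_iff_ne_zero, Finset.sum_eq_zero_iff, Nat.pos_iff_ne_zero]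

lemma isWDom_iff [Fintype V] (G : SimpleGraph V) (k : ℕ) (f : V → ℕ) :
    IsWDom G (1 :: List.replicate k 0) f ↔ (∀ v, f v ≤ k) ∧ Dominates G f := by
  have hget : ∀ n, (1 :: List.replicate k 0).getD n 0 = if n = 0 then 1 else 0 := by
    rintro (_ | n)
    · rfl
    · simp only [List.getD_cons_succ, Nat.add_one_ne_zero, if_false]
      exact List.getElem?_getD_replicate_default_eq 0 k n
  simp only [IsWDom, List.length_cons, List.length_replicate, Nat.lt_succ_iff, hget,
    Dominates, and_congr_right_iff]
  refine fun _ => forall_congr' fun v => ?_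
  rw [← one_le_nbrSum_iff]
  split_ifs with h <;> simp [h]

lemma isSecureWDom_one [Fintype V] (G : SimpleGraph V) {k : ℕ} (hk : 1 ≤ k) :
    IsSecureWDom G (1 :: List.replicate k 0) (fun _ => 1) :=
  ⟨(isWDom_iff G k _).2 ⟨fun _ => hk, fun _ h => absurd h one_ne_zero⟩,
    fun _ h => absurd h one_ne_zero⟩

lemma secWDomNum_le_of_forall {W : Type*} [Fintype V] [Fintype W] {G : SimpleGraph V}
    {G' : SimpleGraph W} {ws ws' : List ℕ} (hne : ∃ f, IsSecureWDom G ws f)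
    (h : ∀ f, IsSecureWDom G ws f → ∃ f', IsSecureWDom G' ws' f' ∧ weight f' ≤ weight f) :
    secWDomNum G' ws' ≤ secWDomNum G ws := by
  obtain ⟨f₀, hf₀⟩ := hne
  obtain ⟨f, hf, hfw⟩ :=
    Nat.sInf_mem (s := {k | ∃ f, IsSecureWDom G ws f ∧ weight f = k}) ⟨weight f₀, f₀, hf₀, rfl⟩
  obtain ⟨f', hf', hf'w⟩ := h f hf
  calc secWDomNum G' ws' ≤ weight f' := Nat.sInf_le ⟨f', hf', rfl⟩
    _ ≤ weight f := hf'w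
    _ = secWDomNum G ws := hfw

end WDom

section Move

variable {V : Type*}

-- The instance is left to unification, since `IsSecureWDom` uses the classical one.
variable {_ : DecidableEq V}

@[simp] lemma move_apply_self (f : V → ℕ) (u v : V) : move f u v v = 1 := if_pos rfl

lemma move_apply_source (f : V → ℕ) {u v : V} (h : u ≠ v) : move f u v u = f u - 1 := by
  simp [move, h]

lemma move_apply_of_ne (f : V → ℕ) {u v x : V} (hv : x ≠ v) (hu : x ≠ u) :
    move f u v x = f x := by
  simp [move, hv, hu]

lemma move_le {f : V → ℕ} {k : ℕ} (hf : ∀ x, f x ≤ k) (hk : 1 ≤ k) (u v : V) :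
    ∀ x, move f u v x ≤ k := by
  intro x
  unfold move
  split_ifs
  · exact hk
  · exact (Nat.sub_le _ _).trans (hf u)
  · exact hf x

end Move

section LexProd

variable {α β : Type*} {G : SimpleGraph α}

lemma lexProd_adj_fst {H : SimpleGraph β} {p q : α × β} (h : (lexProd G H).Adj p q)
    (hne : p.1 ≠ q.1) : G.Adj p.1 q.1 :=
  h.resolve_right fun h' => hne h'.1

lemma dominates_lexProd_top {g : α → ℕ} {f : α × β → ℕ} (hg : Dominates G g) (p : α → β)
    (hp : ∀ x, 0 < g x → 0 < f (x, p x)) : Dominates (lexProd G ⊤) f := by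
  rintro ⟨v, b⟩ hvb
  by_cases hv : 0 < g v
  · have hb : b ≠ p v := by rintro rfl; have := hp v hv; omega
    exact ⟨(v, p v), Or.inr ⟨rfl, hb⟩, hp v hv⟩
  · obtain ⟨u, hvu, hu⟩ := hg v (by omega)
    exact ⟨(u, p u), Or.inl hvu, hp u hu⟩

section RowSum

variable [Fintype β]

def rowSum (f : α × β → ℕ) (x : α) : ℕ := ∑ b, f (x, b)

lemma le_rowSum (f : α × β → ℕ) (x : α) (b : β) : f (x, b) ≤ rowSum f x :=
  Finset.single_le_sum (f := fun b => f (x, b)) (fun _ _ => Nat.zero_le _) (Finset.mem_univ b)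

lemma rowSum_eq_zero_iff {f : α × β → ℕ} {x : α} : rowSum f x = 0 ↔ ∀ b, f (x, b) = 0 := by
  simp [rowSum, Finset.sum_eq_zero_iff]

lemma dominates_rowSum [Nonempty β] {H : SimpleGraph β} {f : α × β → ℕ}
    (hf : Dominates (lexProd G H) f) : Dominates G (rowSum f) := by
  intro v hv
  obtain ⟨b⟩ := ‹Nonempty β›
  obtain ⟨⟨u, c⟩, hadj, hu⟩ := hf (v, b) (rowSum_eq_zero_iff.1 hv b)
  have hvu : v ≠ u := by rintro rfl; have := rowSum_eq_zero_iff.1 hv c; omega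
  exact ⟨u, lexProd_adj_fst hadj hvu, hu.trans_le (le_rowSum f u c)⟩

lemma rowSum_move [DecidableEq α] {_ : DecidableEq (α × β)} {f : α × β → ℕ} {u v : α}
    {b c : β} (huv : u ≠ v) (hv : rowSum f v = 0) (hu : 0 < f (u, c)) :
    rowSum (move f (u, c) (v, b)) = move (rowSum f) u v := by
  classical
  funext x
  by_cases hxv : x = v
  · subst hxv
    have hrow : ∀ e, move f (u, c) (x, b) (x, e) = if e = b then 1 else 0 := by
      intro e
      simp [move, huv.symm, rowSum_eq_zero_iff.1 hv e]
    simp [rowSum, hrow]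
  by_cases hxu : x = u
  · subst hxu
    rw [move_apply_source _ huv]
    have hsplit : ∀ g : β → ℕ, ∑ e, g e = g c + ∑ e ∈ Finset.univ.erase c, g e :=
      fun g => (Finset.add_sum_erase _ g (Finset.mem_univ c)).symm
    have hrest : ∀ e ∈ Finset.univ.erase c, move f (x, c) (v, b) (x, e) = f (x, e) :=
      fun e he => move_apply_of_ne _ (by simp [hxv]) (by simp [Finset.ne_of_mem_erase he])
    simp only [rowSum, hsplit (fun e => move f (x, c) (v, b) (x, e)), hsplit (fun e => f (x, e)),
      Finset.sum_congr rfl hrest, move_apply_source _ (show (x, c) ≠ (v, b) by simp [hxv])]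
    omega
  · rw [move_apply_of_ne _ hxv hxu]
    exact Finset.sum_congr rfl fun e _ => move_apply_of_ne _ (by simp [hxv]) (by simp [hxu])

def truncRowSum (f : α × β → ℕ) (x : α) : ℕ := min (rowSum f x) 2

lemma weight_truncRowSum_le [Fintype α] (f : α × β → ℕ) : weight (truncRowSum f) ≤ weight f := by
  rw [weight, weight, Fintype.sum_prod_type]
  exact Finset.sum_le_sum fun x _ => min_le_left _ _

theorem isSecureWDom_truncRowSum [Fintype α] [Nonempty β] {H : SimpleGraph β} {k : ℕ}
    {f : α × β → ℕ} (hf : IsSecureWDom (lexProd G H) (1 :: List.replicate k 0) f) :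
    IsSecureWDom G [1, 0, 0] (truncRowSum f) := by
  classical
  obtain ⟨hdom, hsec⟩ := hf
  have hpos : ∀ x, 0 < rowSum f x ↔ 0 < truncRowSum f x := fun x => by
    simp only [truncRowSum]; omega
  have hle : ∀ x, truncRowSum f x ≤ 2 := fun x => min_le_right _ _
  have hrow := dominates_rowSum ((isWDom_iff _ k f).1 hdom).2
  refine ⟨(isWDom_iff G 2 _).2 ⟨hle, hrow.of_pos_iff hpos⟩, fun v hv => ?_⟩
  have hv0 : rowSum f v = 0 := by simp only [truncRowSum] at hv; omega
  obtain ⟨b⟩ := ‹Nonempty β›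
  obtain ⟨⟨u, c⟩, hadj, hu, hmove⟩ := hsec (v, b) (rowSum_eq_zero_iff.1 hv0 b)
  have huv : u ≠ v := by rintro rfl; have := rowSum_eq_zero_iff.1 hv0 c; omega
  refine ⟨u, lexProd_adj_fst hadj huv.symm, (hpos u).1 (hu.trans_le (le_rowSum f u c)),
    (isWDom_iff G 2 _).2 ⟨move_le hle (by norm_num) u v, ?_⟩⟩
  have hdom' := dominates_rowSum ((isWDom_iff _ k _).1 hmove).2
  rw [rowSum_move huv hv0 hu] at hdom'
  refine hdom'.of_pos_iff fun x => ?_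
  simp only [move, truncRowSum]
  split_ifs <;> omega

end RowSum

section Lift

variable [DecidableEq β]

def lexLift (b₀ b₁ : β) (g : α → ℕ) (p : α × β) : ℕ :=
  if p.2 = b₀ then min (g p.1) 1 else if p.2 = b₁ then g p.1 - 1 else 0

lemma lexLift_le_one {b₀ b₁ : β} {g : α → ℕ} (hg : ∀ x, g x ≤ 2) (p : α × β) :
    lexLift b₀ b₁ g p ≤ 1 := by
  have := hg p.1
  unfold lexLift
  split_ifs <;> omega

lemma weight_lexLift [Fintype α] [Fintype β] {b₀ b₁ : β} (hb : b₀ ≠ b₁) {g : α → ℕ}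
    (hg : ∀ x, g x ≤ 2) : weight (lexLift b₀ b₁ g) = weight g := by
  rw [weight, weight, Fintype.sum_prod_type]
  refine Finset.sum_congr rfl fun x _ => ?_
  rw [Fintype.sum_eq_add b₀ b₁ hb fun e he => by simp [lexLift, he.1, he.2]]
  have := hg x
  simp only [lexLift, if_pos, hb.symm, if_false]
  omega

theorem isSecureWDom_lexLift [Fintype α] [Fintype β] {b₀ b₁ : β} (hb : b₀ ≠ b₁) {g : α → ℕ}
    (hg : IsSecureWDom G [1, 0, 0] g) :
    IsSecureWDom (lexProd G ⊤) [1, 0] (lexLift b₀ b₁ g) := by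
  classical
  obtain ⟨hdom, hsec⟩ := hg
  obtain ⟨hg2, hgdom⟩ := (isWDom_iff G 2 g).1 hdom
  set f := lexLift b₀ b₁ g
  have hf1 : ∀ p, f p ≤ 1 := lexLift_le_one hg2
  have hf₀ : ∀ x, 0 < g x → 0 < f (x, b₀) := fun x hx => by simp [f, lexLift]; omega
  refine ⟨(isWDom_iff _ 1 f).2 ⟨hf1, dominates_lexProd_top hgdom _ hf₀⟩, ?_⟩
  rintro ⟨v, b⟩ hvb
  by_cases hv : 0 < g v
  · have hb₀ : b ≠ b₀ := by rintro rfl; have := hf₀ v hv; omega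
    refine ⟨(v, b₀), Or.inr ⟨rfl, hb₀⟩, hf₀ v hv, (isWDom_iff _ 1 _).2 ⟨move_le hf1 le_rfl _ _,
      dominates_lexProd_top hgdom (fun x => if x = v then b else b₀) fun x hx => ?_⟩⟩
    split_ifs with hxv
    · subst hxv; simp
    · rw [move_apply_of_ne _ (by simp [hxv]) (by simp [hxv])]
      exact hf₀ x hx
  · obtain ⟨u, hvu, hu, hmove⟩ := hsec v (by omega)
    have huv : u ≠ v := (G.ne_of_adj hvu).symm
    refine ⟨(u, b₀), Or.inl hvu, hf₀ u hu, (isWDom_iff _ 1 _).2 ⟨move_le hf1 le_rfl _ _,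
      dominates_lexProd_top ((isWDom_iff G 2 _).1 hmove).2
        (fun x => if x = v then b else if x = u then b₁ else b₀) fun x hx => ?_⟩⟩
    split_ifs with hxv hxu
    · subst hxv; simp
    · subst hxu
      rw [move_apply_source _ huv] at hx
      rw [move_apply_of_ne _ (by simp [huv]) (by simp [hb.symm])]
      simp only [f, lexLift, hb.symm, if_false, if_true]
      omega
    · rw [move_apply_of_ne _ hxv hxu] at hx
      rw [move_apply_of_ne _ (by simp [hxv]) (by simp [hxu])]
      exact hf₀ x hx

end Lift

end LexProd

end SecureW

open SecureW in
theorem stmt_1_general {α β : Type*} [Fintype α] [Fintype β]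
    (G : SimpleGraph α) (hH : Nontrivial β) :
    secWDomNum (lexProd G (⊤ : SimpleGraph β)) [1, 0] = secWDomNum G [1, 0, 0] := by
  classical
  obtain ⟨b₀, b₁, hb⟩ := hH
  have : Nonempty β := ⟨b₀⟩
  apply le_antisymm
  · refine secWDomNum_le_of_forall ⟨_, isSecureWDom_one G (k := 2) (by norm_num)⟩
      fun g hg => ⟨_, isSecureWDom_lexLift hb hg, ?_⟩
    exact (weight_lexLift hb ((isWDom_iff G 2 g).1 hg.1).1).le
  · exact secWDomNum_le_of_forall ⟨_, isSecureWDom_one _ (k := 1) le_rfl⟩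
      fun f hf => ⟨_, isSecureWDom_truncRowSum (k := 1) hf, weight_truncRowSum_le f⟩

open SecureW in
theorem stmt_1 {α β : Type*} [Fintype α] [Fintype β]
    (G : SimpleGraph α) (hG : NoIsolated G) (hH : Nontrivial β) :
    secWDomNum (lexProd G (⊤ : SimpleGraph β)) [1, 0] = secWDomNum G [1, 0, 0] :=
  stmt_1_general G hH
end

section
/- For integers n,r≥4, the secure domination number of the lexicographic product K_{n,r}∘H equals 4 for every nontrivial graph H, where K_{n,r} is the complete bipartite graph. -/
/-!
In `K ∘ H` a vertex `(a, y)` is dominated either from its own column `{a} × V(H)` or from a column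
`{a'} × V(H)` with `a'` adjacent to `a`. If a dominating function on `K_{n,r} ∘ H` had weight at
most `3 < n, r`, each side would contain an empty column, so both sides carry weight and one side
carries a single unit. Attacking an empty column on the other side forces that unit to move,
which empties its side, and an empty column of the opposite side is then undominated.
Conversely, two vertices on each side inside one copy of `H` form a secure dominating set.
-/

namespace SecureW

open Finset

theorem secWDomNum_eq_of_le_weight {V : Type*} [Fintype V] {G : SimpleGraph V} {ws : List ℕ}
    {k : ℕ} (hex : ∃ f, IsSecureWDom G ws f ∧ weight f = k)
    (hle : ∀ f, IsSecureWDom G ws f → k ≤ weight f) : secWDomNum G ws = k := by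
  refine le_antisymm (Nat.sInf_le hex) (le_csInf ⟨k, hex⟩ ?_)
  rintro _ ⟨f, hf, rfl⟩
  exact hle f hf

theorem isSecureWDom_iff {V : Type*} [Fintype V] [DecidableEq V] {G : SimpleGraph V}
    {ws : List ℕ} {f : V → ℕ} :
    IsSecureWDom G ws f ↔
      IsWDom G ws f ∧ ∀ v, f v = 0 → ∃ u, G.Adj v u ∧ 0 < f u ∧ IsWDom G ws (move f u v) := by
  unfold IsSecureWDom
  congr!

section Move

variable {V : Type*} [DecidableEq V] (f : V → ℕ) (u v : V)

theorem move_self : move f u v v = 1 := if_pos rfl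

theorem move_of_ne {x : V} (hv : x ≠ v) (hu : x ≠ u) : move f u v x = f x := by
  simp [move, hv, hu]

theorem move_le_one (hf : ∀ x, f x ≤ 1) (x : V) : move f u v x ≤ 1 := by
  have := hf u
  have := hf x
  unfold move
  split_ifs <;> omega

theorem move_add_ite (hv : f v = 0) (hu : 0 < f u) (x : V) :
    move f u v x + (if x = u then 1 else 0) = f x + (if x = v then 1 else 0) := by
  have huv : u ≠ v := by rintro rfl; omega
  unfold move
  split_ifs <;> simp_all [Nat.sub_add_cancel hu]

theorem sum_move_add (hv : f v = 0) (hu : 0 < f u) (S : Finset V) :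
    ∑ x ∈ S, move f u v x + (if u ∈ S then 1 else 0) =
      ∑ x ∈ S, f x + (if v ∈ S then 1 else 0) := by
  have := Finset.sum_congr rfl (fun x (_ : x ∈ S) => move_add_ite f u v hv hu x)
  simpa only [Finset.sum_add_distrib, Finset.sum_ite_eq'] using this

theorem weight_move [Fintype V] (hv : f v = 0) (hu : 0 < f u) :
    weight (move f u v) = weight f := by
  simpa [weight] using sum_move_add f u v hv hu univ

end Move

section Domination

open scoped Classical

variable {V : Type*} [Fintype V] {G : SimpleGraph V} {f : V → ℕ}

theorem le_nbrSum {v u : V} (h : G.Adj v u) : f u ≤ nbrSum G f v := by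
  unfold nbrSum
  exact single_le_sum (fun _ _ => Nat.zero_le _) (mem_filter.mpr ⟨mem_univ _, h⟩)

theorem IsWDom.exists_adj_pos (hf : IsWDom G [1, 0] f) {v : V} (hv : f v = 0) :
    ∃ u, G.Adj v u ∧ 0 < f u := by
  have h : 1 ≤ nbrSum G f v := by simpa [hv] using hf.2 v
  unfold nbrSum at h
  obtain ⟨u, hu, hpos⟩ := exists_ne_zero_of_sum_ne_zero (Nat.one_le_iff_ne_zero.mp h)
  exact ⟨u, (mem_filter.mp hu).2, Nat.pos_of_ne_zero hpos⟩

theorem isWDom_of_exists_adj_pos (hle : ∀ v, f v ≤ 1)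
    (h : ∀ v, f v = 0 → ∃ u, G.Adj v u ∧ 0 < f u) : IsWDom G [1, 0] f := by
  refine ⟨fun v => Nat.lt_succ_of_le (hle v), fun v => ?_⟩
  rcases Nat.le_one_iff_eq_zero_or_eq_one.mp (hle v) with hv | hv
  · obtain ⟨u, hadj, hpos⟩ := h v hv
    rw [hv]
    exact hpos.trans_le (le_nbrSum hadj)
  · simp [hv]

end Domination

section LexProd

variable {α β : Type*} [Fintype β] {K : SimpleGraph α} {H : SimpleGraph β} {f : α × β → ℕ}

def colWeight (f : α × β → ℕ) (a : α) : ℕ := ∑ y, f (a, y)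

theorem le_colWeight (f : α × β → ℕ) (a : α) (y : β) : f (a, y) ≤ colWeight f a :=
  single_le_sum (f := fun y => f (a, y)) (fun _ _ => Nat.zero_le _) (mem_univ y)

theorem exists_colWeight_eq_zero {A : Finset α} (hA : ∑ a ∈ A, colWeight f a < #A) :
    ∃ a ∈ A, colWeight f a = 0 := by
  obtain ⟨a, ha, hlt⟩ := exists_lt_of_sum_lt (g := fun _ => 1) (by simpa using hA)
  exact ⟨a, ha, Nat.lt_one_iff.mp hlt⟩

variable [Fintype α]

theorem weight_eq_sum_colWeight (f : α × β → ℕ) : weight f = ∑ a, colWeight f a :=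
  Fintype.sum_prod_type _

theorem exists_adj_colWeight_pos [Nonempty β] (hf : IsWDom (lexProd K H) [1, 0] f) {a : α}
    (ha : colWeight f a = 0) : ∃ a', K.Adj a a' ∧ 0 < colWeight f a' := by
  have hzero : ∀ y, f (a, y) = 0 := fun y => Nat.eq_zero_of_le_zero (ha ▸ le_colWeight f a y)
  obtain ⟨⟨a', z⟩, hadj, hpos⟩ := hf.exists_adj_pos (hzero (Classical.arbitrary β))
  rcases hadj with hK | ⟨rfl, -⟩
  · exact ⟨a', hK, hpos.trans_le (le_colWeight f a' z)⟩
  · exact absurd (hzero z) hpos.ne'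

theorem sum_colWeight_pos_of_lt_card [Nonempty β] (hf : IsWDom (lexProd K H) [1, 0] f)
    {A B : Finset α} (hAB : ∀ a ∈ A, ∀ a', K.Adj a a' → a' ∈ B)
    (hA : ∑ a ∈ A, colWeight f a < #A) : 0 < ∑ b ∈ B, colWeight f b := by
  obtain ⟨a, ha, ha0⟩ := exists_colWeight_eq_zero hA
  obtain ⟨a', hadj, hpos⟩ := exists_adj_colWeight_pos hf ha0
  exact hpos.trans_le (single_le_sum (fun _ _ => Nat.zero_le _) (hAB a ha a' hadj))

/-- If the side `A` carries a single unit, an empty column of the other side `B` can only be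
defended from `A`; after the move `A` is empty while `B` still has an empty column. -/
theorem not_isSecureWDom_of_sum_colWeight_eq_one [Nonempty β]
    (hf : IsSecureWDom (lexProd K H) [1, 0] f) {A B : Finset α} (hdisj : Disjoint A B)
    (hBA : ∀ b ∈ B, ∀ b', K.Adj b b' → b' ∈ A)
    (hA : ∑ a ∈ A, colWeight f a = 1) (hw : weight f < #B) : False := by
  classical
  have hle_weight : ∀ g : α × β → ℕ, ∑ b ∈ B, colWeight g b ≤ weight g := fun g =>
    weight_eq_sum_colWeight g ▸ sum_le_univ_sum_of_nonneg (fun _ => Nat.zero_le _)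
  obtain ⟨b, hb, hb0⟩ := exists_colWeight_eq_zero ((hle_weight f).trans_lt hw)
  have hzero : ∀ y, f (b, y) = 0 := fun y => Nat.eq_zero_of_le_zero (hb0 ▸ le_colWeight f b y)
  obtain ⟨y₀⟩ := ‹Nonempty β›
  obtain ⟨⟨a, z⟩, hadj, hpos, hg⟩ := (isSecureWDom_iff.mp hf).2 (b, y₀) (hzero y₀)
  have ha : a ∈ A := by
    rcases hadj with hK | ⟨rfl, -⟩
    · exact hBA b hb a hK
    · exact absurd (hzero z) hpos.ne'
  have hgA : ∑ c ∈ A, colWeight (move f (a, z) (b, y₀)) c = 0 := by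
    have := sum_move_add f (a, z) (b, y₀) (hzero y₀) hpos (A ×ˢ univ)
    simp only [mem_product, mem_univ, and_true, ha, if_true,
      disjoint_left.mp hdisj.symm hb, if_false] at this
    simp only [colWeight, ← sum_product', Prod.mk.eta] at hA ⊢
    omega
  have hgB : ∑ c ∈ B, colWeight (move f (a, z) (b, y₀)) c < #B :=
    (hle_weight _).trans_lt (weight_move f (a, z) (b, y₀) (hzero y₀) hpos ▸ hw)
  exact (sum_colWeight_pos_of_lt_card hg hBA hgB).ne' hgA

end LexProd

section CompleteBipartite

variable {α γ β : Type*} [Fintype α] [Fintype γ] [Fintype β] {H : SimpleGraph β}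
  {f : (α ⊕ γ) × β → ℕ}

theorem isWDom_of_pos_inl_of_pos_inr (hle : ∀ x, f x ≤ 1) {a : α} {b : γ} {y z : β}
    (hl : 0 < f (.inl a, y)) (hr : 0 < f (.inr b, z)) :
    IsWDom (lexProd (completeBipartiteGraph α γ) H) [1, 0] f := by
  refine isWDom_of_exists_adj_pos hle ?_
  rintro ⟨a' | b', y'⟩ -
  · exact ⟨_, Or.inl (by simp), hr⟩
  · exact ⟨_, Or.inl (by simp), hl⟩

theorem mem_map_inr_of_adj_of_mem_map_inl :
    ∀ a ∈ (univ : Finset α).map .inl, ∀ a', (completeBipartiteGraph α γ).Adj a a' →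
      a' ∈ (univ : Finset γ).map .inr := by
  aesop

theorem mem_map_inl_of_adj_of_mem_map_inr :
    ∀ b ∈ (univ : Finset γ).map .inr, ∀ b', (completeBipartiteGraph α γ).Adj b b' →
      b' ∈ (univ : Finset α).map .inl := by
  aesop

theorem weight_eq_sum_inl_add_sum_inr (f : (α ⊕ γ) × β → ℕ) :
    weight f = ∑ a ∈ univ.map .inl, colWeight f a + ∑ b ∈ univ.map .inr, colWeight f b := by
  rw [weight_eq_sum_colWeight, Fintype.sum_sum_type, sum_map, sum_map]
  rfl

theorem four_le_weight [Nonempty β] (hα : 4 ≤ Fintype.card α) (hγ : 4 ≤ Fintype.card γ)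
    (hf : IsSecureWDom (lexProd (completeBipartiteGraph α γ) H) [1, 0] f) : 4 ≤ weight f := by
  by_contra! hw
  have hsplit := weight_eq_sum_inl_add_sum_inr f
  have hL := sum_colWeight_pos_of_lt_card hf.1 mem_map_inl_of_adj_of_mem_map_inr
    (by rw [card_map, card_univ]; omega)
  have hR := sum_colWeight_pos_of_lt_card hf.1 mem_map_inr_of_adj_of_mem_map_inl
    (by rw [card_map, card_univ]; omega)
  rcases (by omega : ∑ a ∈ (univ : Finset α).map .inl, colWeight f a = 1 ∨
      ∑ b ∈ (univ : Finset γ).map .inr, colWeight f b = 1) with h | h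
  · exact not_isSecureWDom_of_sum_colWeight_eq_one hf (disjoint_map_inl_map_inr _ _)
      mem_map_inl_of_adj_of_mem_map_inr h (by rw [card_map, card_univ]; omega)
  · exact not_isSecureWDom_of_sum_colWeight_eq_one hf (disjoint_map_inl_map_inr _ _).symm
      mem_map_inr_of_adj_of_mem_map_inl h (by rw [card_map, card_univ]; omega)

/-- Whichever vertex is attacked, a vertex of the other side moves there and both sides stay
occupied. -/
theorem exists_isSecureWDom_weight_eq_four [Nontrivial α] [Nontrivial γ] [Nonempty β] :
    ∃ f, IsSecureWDom (lexProd (completeBipartiteGraph α γ) H) [1, 0] f ∧ weight f = 4 := by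
  classical
  obtain ⟨a₀, a₁, ha⟩ := exists_pair_ne α
  obtain ⟨b₀, b₁, hb⟩ := exists_pair_ne γ
  obtain ⟨y₀⟩ := ‹Nonempty β›
  let T : Finset ((α ⊕ γ) × β) := {.inl a₀, .inl a₁, .inr b₀, .inr b₁} ×ˢ {y₀}
  let f : (α ⊕ γ) × β → ℕ := fun x => if x ∈ T then 1 else 0
  have hle : ∀ x, f x ≤ 1 := fun x => by simp only [f]; split_ifs <;> omega
  have hdom := isWDom_of_pos_inl_of_pos_inr (H := H) hle (a := a₀) (b := b₀) (y := y₀) (z := y₀)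
    (by simp [f, T]) (by simp [f, T])
  refine ⟨f, isSecureWDom_iff.mpr ⟨hdom, ?_⟩, ?_⟩
  · rintro ⟨a | b, y⟩ hv
    · refine ⟨(.inr b₀, y₀), Or.inl (by simp), by simp [f, T], ?_⟩
      refine isWDom_of_pos_inl_of_pos_inr (move_le_one f _ _ hle) (b := b₁) (z := y₀)
        (by rw [move_self]; omega) ?_
      rw [move_of_ne _ _ _ (by simp) (by simp [hb.symm])]
      simp [f, T]
    · refine ⟨(.inl a₀, y₀), Or.inl (by simp), by simp [f, T], ?_⟩
      refine isWDom_of_pos_inl_of_pos_inr (move_le_one f _ _ hle) (a := a₁) (y := y₀)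
        ?_ (by rw [move_self]; omega)
      rw [move_of_ne _ _ _ (by simp) (by simp [ha.symm])]
      simp [f, T]
  · rw [weight, sum_boole, filter_mem_eq_inter, univ_inter, card_product, card_singleton,
      mul_one]
    simp [card_insert_of_notMem, ha, hb]

end CompleteBipartite

end SecureW

open SecureW in
theorem stmt_8 {β : Type*} [Fintype β] (n r : ℕ) (hn : 4 ≤ n) (hr : 4 ≤ r)
    (H : SimpleGraph β) (hH : Nontrivial β) :
    secWDomNum (lexProd (completeBipartiteGraph (Fin n) (Fin r)) H) [1, 0] = 4 := by
  have : Nontrivial (Fin n) := Fin.nontrivial_iff_two_le.mpr (by omega)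
  have : Nontrivial (Fin r) := Fin.nontrivial_iff_two_le.mpr (by omega)
  refine secWDomNum_eq_of_le_weight exists_isSecureWDom_weight_eq_four fun f hf => ?_
  exact four_le_weight (by simpa using hn) (by simpa using hr) hf
end
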